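/- Uniqueness of the transport-equation solution: if Γ and Γ' both solve ∂Γ/∂τ + ω·∇_θ Γ = Γ ⋆ B(θ) with Γ(0,θ₀;θ₀) = 𝟙, where each word component is smooth in θ and polynomial in τ, then Γ = Γ'. (Proved by induction on word length using the nonresonant transport lemma.) -/

import Mathlib

open Real

noncomputable def conv {A : Type*} (δ δ' : List A → ℂ) : List A → ℂ :=
  fun w => ∑ j ∈ Finset.range (w.length + 1), δ (w.take j) * δ' (w.drop j)

noncomputable def convOne {A : Type*} [DecidableEq A] : List A → ℂ :=
  fun w => if w = [] then 1 else 0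

/-- `B(θ)`: `B_k(θ) = exp(i k·θ)` on one-letter words, `0` otherwise. -/
noncomputable def Bcoef {d : ℕ} (θ : Fin d → ℝ) : List (Fin d → ℤ) → ℂ :=
  fun w => match w with
    | [k] => Complex.exp (Complex.I * ((∑ j, (k j : ℝ) * θ j : ℝ) : ℂ))
    | _ => 0

def Nonresonant {d : ℕ} (ω : Fin d → ℝ) : Prop :=
  ∀ k : Fin d → ℤ, (∑ j, (k j : ℝ) * ω j) = 0 → k = 0

/-- `Γ` solves the transport problem
`∂Γ/∂τ + ω·∇_θ Γ = Γ ⋆ B(θ)`, `Γ(0,θ₀;θ₀) = 𝟙`, with each word component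
smooth and `2π`-periodic in `θ` and polynomial in `τ` with θ-smooth
coefficients. -/
def IsTransportSolution {d : ℕ} (ω : Fin d → ℝ) (θ₀ : Fin d → ℝ)
    (Γ : ℝ → (Fin d → ℝ) → List (Fin d → ℤ) → ℂ) : Prop :=
  (∀ w : List (Fin d → ℤ),
      ContDiff ℝ (⊤ : ℕ∞) (fun p : ℝ × (Fin d → ℝ) => Γ p.1 p.2 w)) ∧
  (∀ (w : List (Fin d → ℤ)) (τ : ℝ) (θ : Fin d → ℝ) (j : Fin d),
      Γ τ (θ + (2 * π) • (Pi.single j 1 : Fin d → ℝ)) w = Γ τ θ w) ∧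
  (∀ w : List (Fin d → ℤ), ∃ (N : ℕ) (c : Fin (N + 1) → (Fin d → ℝ) → ℂ),
      ∀ (τ : ℝ) (θ : Fin d → ℝ), Γ τ θ w = ∑ i, c i θ * (τ : ℂ) ^ (i : ℕ)) ∧
  (∀ (w : List (Fin d → ℤ)) (τ : ℝ) (θ : Fin d → ℝ),
      HasDerivAt (fun s : ℝ => Γ (τ + s) (θ + s • ω) w)
        (conv (Γ τ θ) (Bcoef θ) w) 0) ∧
  Γ 0 θ₀ = convOne

/-! ### Auxiliary material for the uniqueness proof -/

section Aux

open Complex Filter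

variable {d : ℕ}

/-- The projection from `ℝ^d` to the `d`-torus. -/
noncomputable def PhiT {d : ℕ} : (Fin d → ℝ) → (Fin d → AddCircle (2 * π)) :=
  fun θ j => (θ j : AddCircle (2 * π))

lemma isQuotientMap_PhiT : Topology.IsQuotientMap (PhiT (d := d)) := by
  have : PhiT (d := d) = Pi.map (fun j (t : ℝ) => (t : AddCircle (2 * π))) := rfl
  rw [this]
  exact (IsOpenQuotientMap.piMap fun j => QuotientAddGroup.isOpenQuotientMap_mk).isQuotientMap

/-- A function which is `2π`-periodic in each coordinate is invariant under
adding integer multiples of `2π` to all coordinates. -/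
lemma multi_periodic (F : (Fin d → ℝ) → ℂ)
    (hper : ∀ (θ : Fin d → ℝ) (j : Fin d), F (θ + (2 * π) • (Pi.single j 1 : Fin d → ℝ)) = F θ)
    (θ : Fin d → ℝ) (m : Fin d → ℤ) :
    F (θ + fun j => (m j : ℝ) * (2 * π)) = F θ := by
  have hZ : ∀ (ψ : Fin d → ℝ) (j : Fin d) (n : ℤ),
      F (ψ + n • ((2 * π) • (Pi.single j 1 : Fin d → ℝ))) = F ψ := by
    intro ψ j n
    induction n using Int.induction_on with
    | zero => simp
    | succ n ih =>
        have : ψ + ((n : ℤ) + 1) • ((2 * π) • (Pi.single j 1 : Fin d → ℝ))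
            = (ψ + (n : ℤ) • ((2 * π) • (Pi.single j 1 : Fin d → ℝ)))
              + (2 * π) • (Pi.single j 1 : Fin d → ℝ) := by
          rw [add_smul, one_smul, add_assoc]
        rw [this, hper, ih]
    | pred n ih =>
        have : ψ + (-(n : ℤ) - 1) • ((2 * π) • (Pi.single j 1 : Fin d → ℝ))
              + (2 * π) • (Pi.single j 1 : Fin d → ℝ)
            = ψ + (-(n : ℤ)) • ((2 * π) • (Pi.single j 1 : Fin d → ℝ)) := by
          rw [sub_smul, one_smul, add_assoc]; ring_nf
        calc F (ψ + (-(n : ℤ) - 1) • ((2 * π) • (Pi.single j 1 : Fin d → ℝ)))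
            = F (ψ + (-(n : ℤ) - 1) • ((2 * π) • (Pi.single j 1 : Fin d → ℝ))
                + (2 * π) • (Pi.single j 1 : Fin d → ℝ)) := (hper _ j).symm
          _ = F (ψ + (-(n : ℤ)) • ((2 * π) • (Pi.single j 1 : Fin d → ℝ))) := by rw [this]
          _ = F ψ := ih
  have key : ∀ s : Finset (Fin d),
      F (θ + ∑ j ∈ s, (m j) • ((2 * π) • (Pi.single j 1 : Fin d → ℝ))) = F θ := by
    intro s
    induction s using Finset.induction_on with
    | empty => simp
    | insert _ _ hj ih =>
        rename_i j s
        rw [Finset.sum_insert hj, add_comm ((m j) • ((2 * π) • (Pi.single j 1 : Fin d → ℝ))),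
          ← add_assoc, hZ, ih]
  have hrep : (fun j => (m j : ℝ) * (2 * π))
      = ∑ j ∈ Finset.univ, (m j) • ((2 * π) • (Pi.single j 1 : Fin d → ℝ)) := by
    funext i
    rw [Finset.sum_apply]
    rw [Finset.sum_eq_single i]
    · simp [mul_comm]
    · intro j _ hji
      simp [Pi.single_apply, Ne.symm hji]
    · simp
  rw [hrep, key]

/-- A coordinatewise `2π`-periodic function is constant on the fibres of `PhiT`. -/
lemma phiT_fiber (F : (Fin d → ℝ) → ℂ)
    (hper : ∀ (θ : Fin d → ℝ) (j : Fin d), F (θ + (2 * π) • (Pi.single j 1 : Fin d → ℝ)) = F θ)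
    (a b : Fin d → ℝ) (hab : PhiT a = PhiT b) : F a = F b := by
  have h : ∀ j, ∃ m : ℤ, b j - a j = m • (2 * π) := by
    intro j
    have h1 : PhiT a j = PhiT b j := congrFun hab j
    have h2 : ((a j : ℝ) : AddCircle (2 * π)) = ((b j : ℝ) : AddCircle (2 * π)) := h1
    rw [QuotientAddGroup.eq_iff_sub_mem, AddSubgroup.mem_zmultiples_iff] at h2
    obtain ⟨m, hm⟩ := h2
    exact ⟨-m, by rw [neg_zsmul, hm]; ring⟩
  choose m hm using h
  have hb : b = a + fun j => (m j : ℝ) * (2 * π) := by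
    funext j
    have h3 := hm j
    rw [zsmul_eq_mul] at h3
    have h4 : b j = a j + (m j : ℝ) * (2 * π) := by linarith
    simpa using h4
  rw [hb, multi_periodic F hper a m]

/-- A continuous coordinatewise periodic function on `ℝ^d` descends to a continuous map
on the torus. -/
lemma exists_torus_descent (F : (Fin d → ℝ) → ℂ) (hF : Continuous F)
    (hper : ∀ (θ : Fin d → ℝ) (j : Fin d), F (θ + (2 * π) • (Pi.single j 1 : Fin d → ℝ)) = F θ) :
    ∃ Gc : C(Fin d → AddCircle (2 * π), ℂ), ∀ ψ, Gc (PhiT ψ) = F ψ := by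
  have hPhisurj : Function.Surjective (PhiT (d := d)) := isQuotientMap_PhiT.surjective
  set sec : (Fin d → AddCircle (2 * π)) → (Fin d → ℝ) :=
    fun x => Classical.choose (hPhisurj x) with hsec
  have hsecspec : ∀ x, PhiT (sec x) = x := fun x => Classical.choose_spec (hPhisurj x)
  have hGPhi : ∀ ψ, F (sec (PhiT ψ)) = F ψ := by
    intro ψ
    exact phiT_fiber F hper _ _ (by rw [hsecspec])
  have hGcont : Continuous (F ∘ sec) := by
    rw [isQuotientMap_PhiT.continuous_iff]
    have : (F ∘ sec) ∘ PhiT = F := funext fun ψ => hGPhi ψ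
    rw [this]; exact hF
  exact ⟨⟨F ∘ sec, hGcont⟩, hGPhi⟩

/-- A continuous coordinatewise periodic function is bounded. -/
lemma periodic_bounded (F : (Fin d → ℝ) → ℂ) (hF : Continuous F)
    (hper : ∀ (θ : Fin d → ℝ) (j : Fin d), F (θ + (2 * π) • (Pi.single j 1 : Fin d → ℝ)) = F θ) :
    ∃ C : ℝ, ∀ ψ, ‖F ψ‖ ≤ C := by
  haveI : Fact (0 < 2 * π) := ⟨Real.two_pi_pos⟩
  obtain ⟨Gc, hGc⟩ := exists_torus_descent F hF hper
  exact ⟨‖Gc‖, fun ψ => by rw [← hGc ψ]; exact Gc.norm_coe_le_norm _⟩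

/-- The characters of the `d`-torus. -/
noncomputable def charT {d : ℕ} (k : Fin d → ℤ) : C(Fin d → AddCircle (2 * π), ℂ) :=
  ⟨fun x => ∏ j, (AddCircle.toCircle ((k j) • (x j)) : ℂ), by
    refine continuous_finset_prod _ fun j _ => ?_
    exact continuous_subtype_val.comp
      (AddCircle.continuous_toCircle.comp ((continuous_apply j).zsmul (k j)))⟩

lemma charT_apply (k : Fin d → ℤ) (x : Fin d → AddCircle (2 * π)) :
    charT k x = ∏ j, (AddCircle.toCircle ((k j) • (x j)) : ℂ) := rfl

lemma charT_phi (k : Fin d → ℤ) (θ : Fin d → ℝ) :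
    charT k (PhiT θ) = Complex.exp ((↑(∑ j, (k j : ℝ) * θ j)) * Complex.I) := by
  have hπ : (2 * π) ≠ 0 := by positivity
  have h1 : ∀ j, (AddCircle.toCircle ((k j) • ((θ j : ℝ) : AddCircle (2 * π))) : ℂ)
      = Complex.exp ((((k j : ℝ) * θ j : ℝ)) * Complex.I) := by
    intro j
    rw [← AddCircle.coe_zsmul, AddCircle.toCircle_apply_mk, Circle.coe_exp]
    norm_num [div_self hπ, zsmul_eq_mul]
  show (∏ j, (AddCircle.toCircle ((k j) • (PhiT θ j)) : ℂ)) = _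
  simp only [PhiT, h1]
  rw [← Complex.exp_sum]
  congr 1
  push_cast
  rw [Finset.sum_mul]

lemma charT_zero : charT (d := d) 0 = 1 := by
  ext x; simp [charT_apply]

lemma charT_mul (k l : Fin d → ℤ) : charT k * charT l = charT (k + l) := by
  ext x
  simp only [ContinuousMap.mul_apply, charT_apply, ← Finset.prod_mul_distrib]
  refine Finset.prod_congr rfl fun j _ => ?_
  rw [Pi.add_apply, add_zsmul, AddCircle.toCircle_add]
  push_cast
  ring

lemma toCircle_neg' (x : AddCircle (2 * π)) :
    AddCircle.toCircle (-x) = (AddCircle.toCircle x)⁻¹ := by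
  apply eq_inv_of_mul_eq_one_left
  rw [← AddCircle.toCircle_add, neg_add_cancel, AddCircle.toCircle_zero]

lemma charT_star (k : Fin d → ℤ) : star (charT k) = charT (-k) := by
  ext x
  simp only [ContinuousMap.star_apply, charT_apply, star_prod]
  refine Finset.prod_congr rfl fun j _ => ?_
  rw [Pi.neg_apply, neg_zsmul, toCircle_neg']
  simp only [Complex.star_def, ← Circle.coe_inv, Circle.coe_inv_eq_conj]

lemma charT_sep (x y : Fin d → AddCircle (2 * π)) (hxy : x ≠ y) :
    ∃ k : Fin d → ℤ, charT k x ≠ charT k y := by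
  have hπ : (2:ℝ) * π ≠ 0 := by positivity
  obtain ⟨j, hj⟩ : ∃ j, x j ≠ y j := by
    by_contra hc; push_neg at hc; exact hxy (funext hc)
  refine ⟨Pi.single j 1, ?_⟩
  have hx : ∀ z : Fin d → AddCircle (2 * π),
      charT (Pi.single j 1) z = (AddCircle.toCircle (z j) : ℂ) := by
    intro z
    rw [charT_apply, Finset.prod_eq_single j]
    · simp
    · intro i _ hij; simp [Pi.single_apply, hij]
    · simp
  rw [hx, hx]
  intro hc
  exact hj (AddCircle.injective_toCircle hπ (Subtype.ext hc))

lemma mem_span_of_mem_adjoin (f : C(Fin d → AddCircle (2 * π), ℂ))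
    (hf : f ∈ StarAlgebra.adjoin ℂ (Set.range (charT (d := d)))) :
    f ∈ Submodule.span ℂ (Set.range (charT (d := d))) := by
  induction hf using StarAlgebra.adjoin_induction with
  | mem x hx => exact Submodule.subset_span hx
  | algebraMap r =>
      have : (algebraMap ℂ C(Fin d → AddCircle (2 * π), ℂ)) r = r • charT 0 := by
        rw [charT_zero]; ext x; simp [Algebra.algebraMap_eq_smul_one]
      rw [this]
      exact Submodule.smul_mem _ _ (Submodule.subset_span ⟨0, rfl⟩)
  | add x y hx hy ihx ihy => exact Submodule.add_mem _ ihx ihy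
  | mul x y hx hy ihx ihy =>
      clear hx hy
      induction ihx using Submodule.span_induction with
      | mem a ha =>
          induction ihy using Submodule.span_induction with
          | mem b hb =>
              obtain ⟨k, rfl⟩ := ha; obtain ⟨l, rfl⟩ := hb
              rw [charT_mul]
              exact Submodule.subset_span ⟨k + l, rfl⟩
          | zero => rw [mul_zero]; exact Submodule.zero_mem _
          | add b c hb hc ihb ihc => rw [mul_add]; exact Submodule.add_mem _ ihb ihc
          | smul a' b hb ihb => rw [mul_smul_comm]; exact Submodule.smul_mem _ _ ihb
      | zero => rw [zero_mul]; exact Submodule.zero_mem _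
      | add a b ha hb iha ihb => rw [add_mul]; exact Submodule.add_mem _ iha ihb
      | smul a' a ha iha => rw [smul_mul_assoc]; exact Submodule.smul_mem _ _ iha
  | star x hx ihx =>
      clear hx
      induction ihx using Submodule.span_induction with
      | mem a ha =>
          obtain ⟨k, rfl⟩ := ha
          rw [charT_star]
          exact Submodule.subset_span ⟨-k, rfl⟩
      | zero => rw [star_zero]; exact Submodule.zero_mem _
      | add a b ha hb iha ihb => rw [star_add]; exact Submodule.add_mem _ iha ihb
      | smul a' a ha iha =>
          rw [star_smul]
          exact Submodule.smul_mem _ _ iha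

/-- The time average of a nontrivial character along a nonresonant line tends to zero;
difference version at two base points. -/
lemma avg_char_tendsto (ω : Fin d → ℝ) (hω : Nonresonant ω) (θ θ' : Fin d → ℝ)
    (k : Fin d → ℤ) :
    Tendsto (fun T : ℝ => ((T : ℂ))⁻¹ *
      ((∫ s in (0:ℝ)..T, charT k (PhiT (θ + s • ω))) -
       (∫ s in (0:ℝ)..T, charT k (PhiT (θ' + s • ω))))) atTop (nhds 0) := by
  have hsum : ∀ (ψ : Fin d → ℝ) (s : ℝ), (∑ j, (k j : ℝ) * (ψ + s • ω) j)
      = (∑ j, (k j : ℝ) * ψ j) + s * (∑ j, (k j : ℝ) * ω j) := by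
    intro ψ s
    rw [Finset.mul_sum]
    rw [← Finset.sum_add_distrib]
    refine Finset.sum_congr rfl fun j _ => ?_
    simp [Pi.add_apply, Pi.smul_apply, smul_eq_mul]
    ring
  by_cases hk : k = 0
  · subst hk
    have h1 : ∀ (ψ : Fin d → ℝ) (s : ℝ), charT (0 : Fin d → ℤ) (PhiT (ψ + s • ω)) = 1 := by
      intro ψ s; rw [charT_phi]; simp
    simp only [h1]
    have h2 : ∀ T : ℝ, ((T : ℂ))⁻¹ *
        ((∫ _ in (0:ℝ)..T, (1:ℂ)) - (∫ _ in (0:ℝ)..T, (1:ℂ))) = 0 := by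
      intro T; rw [sub_self, mul_zero]
    simp only [h2]
    exact tendsto_const_nhds
  · set b : ℝ := ∑ j, (k j : ℝ) * ω j with hb
    have hbne : b ≠ 0 := fun hc => hk (hω k hc)
    have hcne : (b : ℂ) * Complex.I ≠ 0 := by
      simp [Complex.ofReal_ne_zero, hbne, Complex.I_ne_zero]
    have hInt : ∀ ψ : Fin d → ℝ, ∀ T : ℝ,
        (∫ s in (0:ℝ)..T, charT k (PhiT (ψ + s • ω)))
          = Complex.exp ((↑(∑ j, (k j : ℝ) * ψ j)) * Complex.I) *
            ((Complex.exp (((b:ℂ) * Complex.I) * T) - 1) / ((b:ℂ) * Complex.I)) := by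
      intro ψ T
      have h2 : ∀ s : ℝ, charT k (PhiT (ψ + s • ω))
          = Complex.exp ((↑(∑ j, (k j : ℝ) * ψ j)) * Complex.I) *
              Complex.exp (((b:ℂ) * Complex.I) * s) := by
        intro s
        rw [charT_phi, hsum]
        rw [← Complex.exp_add]
        congr 1
        push_cast
        ring
      simp only [h2]
      rw [intervalIntegral.integral_const_mul, integral_exp_mul_complex hcne]
      congr 1
      rw [Complex.ofReal_zero, mul_zero, Complex.exp_zero]
    have hbound : ∀ ψ : Fin d → ℝ, ∀ T : ℝ,
        ‖∫ s in (0:ℝ)..T, charT k (PhiT (ψ + s • ω))‖ ≤ 2 / ‖(b:ℂ) * Complex.I‖ := by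
      intro ψ T
      rw [hInt, norm_mul, norm_div]
      have e1 : ‖Complex.exp ((↑(∑ j, (k j : ℝ) * ψ j)) * Complex.I)‖ = 1 := by
        rw [Complex.norm_exp_ofReal_mul_I]
      have e2 : ‖Complex.exp (((b:ℂ) * Complex.I) * T) - 1‖ ≤ 2 := by
        refine (norm_sub_le _ _).trans ?_
        have : ((b:ℂ) * Complex.I) * T = ((b * T : ℝ) : ℂ) * Complex.I := by push_cast; ring
        rw [this, Complex.norm_exp_ofReal_mul_I, norm_one]
        norm_num
      rw [e1, one_mul]
      gcongr
    apply squeeze_zero_norm' (a := fun T : ℝ => (4 / ‖(b:ℂ) * Complex.I‖) * T⁻¹)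
    · filter_upwards [eventually_ge_atTop (1:ℝ)] with T hT
      rw [norm_mul]
      have hT0 : (0:ℝ) < T := lt_of_lt_of_le one_pos hT
      have h5 : ‖((T:ℂ))⁻¹‖ = T⁻¹ := by
        rw [norm_inv, Complex.norm_real, Real.norm_eq_abs, abs_of_pos hT0]
      rw [h5, mul_comm]
      have h6 : ‖(∫ s in (0:ℝ)..T, charT k (PhiT (θ + s • ω))) -
          (∫ s in (0:ℝ)..T, charT k (PhiT (θ' + s • ω)))‖ ≤ 4 / ‖(b:ℂ) * Complex.I‖ := by
        refine (norm_sub_le _ _).trans ?_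
        have h7 : (4:ℝ) / ‖(b:ℂ) * Complex.I‖
            = 2 / ‖(b:ℂ) * Complex.I‖ + 2 / ‖(b:ℂ) * Complex.I‖ := by ring
        rw [h7]
        exact add_le_add (hbound θ T) (hbound θ' T)
      gcongr
    · have h8 : Tendsto (fun T : ℝ => T⁻¹) atTop (nhds 0) := tendsto_inv_atTop_zero
      have h9 := h8.const_mul (4 / ‖(b:ℂ) * Complex.I‖)
      simpa using h9

/-- **Kronecker-type theorem.** A continuous, coordinatewise `2π`-periodic function on `ℝ^d`
which is invariant under the nonresonant linear flow `θ ↦ θ + s • ω` is constant. -/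
lemma invariant_const (ω : Fin d → ℝ) (hω : Nonresonant ω)
    (F : (Fin d → ℝ) → ℂ) (hF : Continuous F)
    (hper : ∀ (θ : Fin d → ℝ) (j : Fin d), F (θ + (2 * π) • (Pi.single j 1 : Fin d → ℝ)) = F θ)
    (hinv : ∀ (θ : Fin d → ℝ) (s : ℝ), F (θ + s • ω) = F θ)
    (θ θ' : Fin d → ℝ) : F θ = F θ' := by
  haveI : Fact (0 < 2 * π) := ⟨Real.two_pi_pos⟩
  obtain ⟨Gc, hGval⟩ := exists_torus_descent F hF hper
  set A : StarSubalgebra ℂ C(Fin d → AddCircle (2 * π), ℂ) :=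
    StarAlgebra.adjoin ℂ (Set.range (charT (d := d))) with hA
  have hsep : A.SeparatesPoints := by
    intro x y hxy
    obtain ⟨k, hk⟩ := charT_sep x y hxy
    exact ⟨_, ⟨charT k, StarAlgebra.subset_adjoin ℂ _ ⟨k, rfl⟩, rfl⟩, hk⟩
  have hdense := ContinuousMap.starSubalgebra_topologicalClosure_eq_top_of_separatesPoints A hsep
  have hGmem : Gc ∈ closure (A : Set C(Fin d → AddCircle (2 * π), ℂ)) := by
    rw [← StarSubalgebra.topologicalClosure_coe, hdense]
    trivial
  have key : ∀ ε : ℝ, 0 < ε → ‖F θ - F θ'‖ ≤ 0 + 3 * ε := by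
    intro ε hε
    obtain ⟨g, hgA, hdist⟩ := Metric.mem_closure_iff.mp hGmem ε hε
    have hgspan := mem_span_of_mem_adjoin g hgA
    have hcont : ∀ (g' : C(Fin d → AddCircle (2 * π), ℂ)) (ψ : Fin d → ℝ),
        Continuous (fun s : ℝ => g' (PhiT (ψ + s • ω))) := fun g' ψ =>
      g'.continuous.comp (isQuotientMap_PhiT.continuous.comp
        (continuous_const.add (continuous_id.smul continuous_const)))
    have hP : Tendsto (fun T : ℝ => ((T : ℂ))⁻¹ *
        ((∫ s in (0:ℝ)..T, g (PhiT (θ + s • ω))) -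
         (∫ s in (0:ℝ)..T, g (PhiT (θ' + s • ω))))) atTop (nhds 0) := by
      clear hdist hgA
      induction hgspan using Submodule.span_induction with
      | mem f hf => obtain ⟨k, rfl⟩ := hf; exact avg_char_tendsto ω hω θ θ' k
      | zero => simpa using tendsto_const_nhds (α := ℝ) (f := atTop) (a := (0:ℂ))
      | add f₁ f₂ h₁ h₂ ih₁ ih₂ =>
          have heq : ∀ T : ℝ, ((T : ℂ))⁻¹ *
              ((∫ s in (0:ℝ)..T, (f₁ + f₂) (PhiT (θ + s • ω))) -
               (∫ s in (0:ℝ)..T, (f₁ + f₂) (PhiT (θ' + s • ω))))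
            = ((T : ℂ))⁻¹ * ((∫ s in (0:ℝ)..T, f₁ (PhiT (θ + s • ω))) -
               (∫ s in (0:ℝ)..T, f₁ (PhiT (θ' + s • ω))))
              + ((T : ℂ))⁻¹ * ((∫ s in (0:ℝ)..T, f₂ (PhiT (θ + s • ω))) -
               (∫ s in (0:ℝ)..T, f₂ (PhiT (θ' + s • ω)))) := by
            intro T
            simp only [ContinuousMap.add_apply]
            rw [intervalIntegral.integral_add ((hcont f₁ θ).intervalIntegrable 0 T)
                  ((hcont f₂ θ).intervalIntegrable 0 T),
                intervalIntegral.integral_add ((hcont f₁ θ').intervalIntegrable 0 T)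
                  ((hcont f₂ θ').intervalIntegrable 0 T)]
            ring
          simp only [heq]
          simpa using ih₁.add ih₂
      | smul a f hf ih =>
          have heq : ∀ T : ℝ, ((T : ℂ))⁻¹ *
              ((∫ s in (0:ℝ)..T, (a • f) (PhiT (θ + s • ω))) -
               (∫ s in (0:ℝ)..T, (a • f) (PhiT (θ' + s • ω))))
            = a * (((T : ℂ))⁻¹ * ((∫ s in (0:ℝ)..T, f (PhiT (θ + s • ω))) -
               (∫ s in (0:ℝ)..T, f (PhiT (θ' + s • ω))))) := by
            intro T
            simp only [ContinuousMap.smul_apply, smul_eq_mul]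
            rw [intervalIntegral.integral_const_mul, intervalIntegral.integral_const_mul]
            ring
          simp only [heq]
          simpa using ih.const_mul a
    have hev := (hP.eventually (Metric.ball_mem_nhds (0:ℂ) hε)).and (eventually_ge_atTop (1:ℝ))
    obtain ⟨T, hTball, hT1⟩ := hev.exists
    have hT0 : (0:ℝ) < T := lt_of_lt_of_le one_pos hT1
    have hTC : ((T : ℂ)) ≠ 0 := by exact_mod_cast hT0.ne'
    have herr : ∀ ψ : Fin d → ℝ,
        ‖F ψ - ((T : ℂ))⁻¹ * (∫ s in (0:ℝ)..T, g (PhiT (ψ + s • ω)))‖ ≤ ε := by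
      intro ψ
      have h1 : (∫ s in (0:ℝ)..T, F (ψ + s • ω)) = (T : ℂ) * F ψ := by
        have h0 : ∀ s : ℝ, F (ψ + s • ω) = F ψ := fun s => hinv ψ s
        simp only [h0]
        rw [intervalIntegral.integral_const]
        rw [sub_zero, real_smul]
      have h2 : F ψ - ((T : ℂ))⁻¹ * (∫ s in (0:ℝ)..T, g (PhiT (ψ + s • ω)))
          = ((T : ℂ))⁻¹ * (∫ s in (0:ℝ)..T, (F (ψ + s • ω) - g (PhiT (ψ + s • ω)))) := by
        have hFl : Continuous fun s : ℝ => F (ψ + s • ω) :=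
          hF.comp (continuous_const.add (continuous_id.smul continuous_const))
        rw [intervalIntegral.integral_sub (hFl.intervalIntegrable 0 T)
            ((hcont g ψ).intervalIntegrable 0 T), h1]
        field_simp
      rw [h2, norm_mul]
      have h3 : ‖∫ s in (0:ℝ)..T, (F (ψ + s • ω) - g (PhiT (ψ + s • ω)))‖
          ≤ (dist Gc g) * |T - 0| := by
        refine intervalIntegral.norm_integral_le_of_norm_le_const fun s _ => ?_
        have h3' : F (ψ + s • ω) - g (PhiT (ψ + s • ω)) = (Gc - g) (PhiT (ψ + s • ω)) := by
          rw [ContinuousMap.sub_apply, hGval]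
        rw [h3']
        refine (ContinuousMap.norm_coe_le_norm (Gc - g) _).trans ?_
        exact (dist_eq_norm Gc g).ge
      have h4 : ‖((T:ℂ))⁻¹‖ = T⁻¹ := by
        rw [norm_inv, Complex.norm_real, Real.norm_eq_abs, abs_of_pos hT0]
      calc ‖((T : ℂ))⁻¹‖ * ‖∫ s in (0:ℝ)..T, (F (ψ + s • ω) - g (PhiT (ψ + s • ω)))‖
          ≤ T⁻¹ * ((dist Gc g) * |T - 0|) := by rw [h4]; gcongr
        _ = dist Gc g := by
              rw [sub_zero, abs_of_pos hT0]
              field_simp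
        _ ≤ ε := hdist.le
    have htri : ‖F θ - F θ'‖ ≤
        ‖F θ - ((T : ℂ))⁻¹ * (∫ s in (0:ℝ)..T, g (PhiT (θ + s • ω)))‖
        + ‖((T : ℂ))⁻¹ * ((∫ s in (0:ℝ)..T, g (PhiT (θ + s • ω))) -
            (∫ s in (0:ℝ)..T, g (PhiT (θ' + s • ω))))‖
        + ‖F θ' - ((T : ℂ))⁻¹ * (∫ s in (0:ℝ)..T, g (PhiT (θ' + s • ω)))‖ := by
      have hsplit : F θ - F θ'
          = (F θ - ((T : ℂ))⁻¹ * (∫ s in (0:ℝ)..T, g (PhiT (θ + s • ω))))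
          + (((T : ℂ))⁻¹ * ((∫ s in (0:ℝ)..T, g (PhiT (θ + s • ω))) -
              (∫ s in (0:ℝ)..T, g (PhiT (θ' + s • ω)))))
          - (F θ' - ((T : ℂ))⁻¹ * (∫ s in (0:ℝ)..T, g (PhiT (θ' + s • ω)))) := by ring
      rw [hsplit]
      refine (norm_sub_le _ _).trans ?_
      gcongr
      exact norm_add_le _ _
    have hmid : ‖((T : ℂ))⁻¹ * ((∫ s in (0:ℝ)..T, g (PhiT (θ + s • ω))) -
        (∫ s in (0:ℝ)..T, g (PhiT (θ' + s • ω))))‖ ≤ ε := by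
      have hb := mem_ball_iff_norm.mp hTball
      rw [sub_zero] at hb
      exact hb.le
    calc ‖F θ - F θ'‖ ≤ _ := htri
      _ ≤ ε + ε + ε := add_le_add (add_le_add (herr θ) hmid) (herr θ')
      _ = 0 + 3 * ε := by ring
  have hle : ‖F θ - F θ'‖ ≤ 0 := by
    refine le_of_forall_pos_le_add fun ε hε => ?_
    have h3 := key (ε / 3) (by positivity)
    calc ‖F θ - F θ'‖ ≤ 0 + 3 * (ε / 3) := h3
      _ = 0 + ε := by ring
  have := le_antisymm hle (norm_nonneg _)
  rwa [norm_eq_zero, sub_eq_zero] at this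

/-- A complex polynomial bounded on the reals is constant there. -/
lemma poly_bounded_eval (p : Polynomial ℂ) (C : ℝ)
    (hb : ∀ x : ℝ, ‖p.eval (x : ℂ)‖ ≤ C) (x : ℝ) : p.eval (x : ℂ) = p.eval 0 := by
  have hdeg : p.degree ≤ 0 := by
    by_contra hc
    push_neg at hc
    have h1 := p.tendsto_norm_atTop hc (l := Filter.atTop) (z := fun t : ℝ => (t : ℂ))
      (by simpa [Complex.norm_real] using Filter.tendsto_abs_atTop_atTop)
    obtain ⟨t, ht⟩ := (h1.eventually_gt_atTop C).exists
    exact absurd (hb t) (not_le.mpr ht)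
  rw [Polynomial.eq_C_of_degree_le_zero hdeg]
  simp

end Aux

/-- Uniqueness of the transport-equation solution. -/
theorem transport_solution_unique {d : ℕ} (ω : Fin d → ℝ)
    (hω : Nonresonant ω) (θ₀ : Fin d → ℝ)
    (Γ Γ' : ℝ → (Fin d → ℝ) → List (Fin d → ℤ) → ℂ)
    (h : IsTransportSolution ω θ₀ Γ) (h' : IsTransportSolution ω θ₀ Γ') :
    Γ = Γ' := by
  obtain ⟨hs, hp, hpol, hd, hi⟩ := h
  obtain ⟨hs', hp', hpol', hd', hi'⟩ := h'
  have main : ∀ (n : ℕ) (w : List (Fin d → ℤ)), w.length = n →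
      ∀ (τ : ℝ) (θ : Fin d → ℝ), Γ τ θ w = Γ' τ θ w := by
    intro n
    induction n using Nat.strong_induction_on with
    | _ n IH =>
      intro w hw τ θ
      set u : ℝ → (Fin d → ℝ) → ℂ := fun τ θ => Γ τ θ w - Γ' τ θ w with hu
      have hconv : ∀ (σ : ℝ) (ψ : Fin d → ℝ),
          conv (Γ σ ψ) (Bcoef ψ) w = conv (Γ' σ ψ) (Bcoef ψ) w := by
        intro σ ψ
        unfold conv
        refine Finset.sum_congr rfl fun j hj => ?_
        rcases lt_or_eq_of_le (Nat.lt_succ_iff.mp (Finset.mem_range.mp hj)) with hlt | heq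
        · have htake : (w.take j).length = j := by
            rw [List.length_take]; omega
          rw [IH (w.take j).length (by omega) (w.take j) rfl σ ψ]
        · rw [heq, List.drop_length]
          show Γ σ ψ (w.take w.length) * Bcoef ψ [] = Γ' σ ψ (w.take w.length) * Bcoef ψ []
          have hB0 : Bcoef ψ [] = 0 := rfl
          rw [hB0, mul_zero, mul_zero]
      have hderiv : ∀ (σ : ℝ) (ψ : Fin d → ℝ),
          HasDerivAt (fun s : ℝ => u (σ + s) (ψ + s • ω)) 0 0 := by
        intro σ ψ
        have hsub := (hd w σ ψ).sub (hd' w σ ψ)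
        rwa [hconv, sub_self] at hsub
      have hconst : ∀ (σ : ℝ) (ψ : Fin d → ℝ) (s : ℝ), u (σ + s) (ψ + s • ω) = u σ ψ := by
        intro σ ψ s
        have hg : ∀ s₀ : ℝ, HasDerivAt (fun s : ℝ => u (σ + s) (ψ + s • ω)) 0 s₀ := by
          intro s₀
          have h1 := hderiv (σ + s₀) (ψ + s₀ • ω)
          have h2 : HasDerivAt (fun s : ℝ => s - s₀) 1 s₀ := by
            simpa using (hasDerivAt_id s₀).sub_const s₀
          have h1' : HasDerivAt (fun s : ℝ => u (σ + s₀ + s) (ψ + s₀ • ω + s • ω)) 0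
              (s₀ - s₀) := by
            simpa using h1
          have h3 := HasDerivAt.scomp (h := fun s : ℝ => s - s₀) s₀ h1' h2
          simp only [one_smul] at h3
          have h4 : ((fun s : ℝ => u (σ + s₀ + s) (ψ + s₀ • ω + s • ω)) ∘ fun s => s - s₀)
              = fun s : ℝ => u (σ + s) (ψ + s • ω) := by
            funext s
            show u (σ + s₀ + (s - s₀)) (ψ + s₀ • ω + (s - s₀) • ω) = _
            have e1 : σ + s₀ + (s - s₀) = σ + s := by ring
            have e2 : ψ + s₀ • ω + (s - s₀) • ω = ψ + s • ω := by
              funext i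
              simp only [Pi.add_apply, Pi.smul_apply, smul_eq_mul]
              ring
            rw [e1, e2]
          rw [h4] at h3
          exact h3
        have hdiff : Differentiable ℝ (fun s : ℝ => u (σ + s) (ψ + s • ω)) :=
          fun s₀ => (hg s₀).differentiableAt
        have hcc := is_const_of_deriv_eq_zero hdiff (fun s₀ => (hg s₀).deriv) s 0
        simpa using hcc
      -- the function at time zero
      set F : (Fin d → ℝ) → ℂ := fun ψ => u 0 ψ with hFdef
      have hrep : ∀ (σ : ℝ) (ψ : Fin d → ℝ), u σ ψ = F (ψ - σ • ω) := by
        intro σ ψ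
        have hc := hconst 0 (ψ - σ • ω) σ
        rw [zero_add, sub_add_cancel] at hc
        exact hc
      have hFcont : Continuous F := by
        have c1 : Continuous (fun ψ : Fin d → ℝ => Γ 0 ψ w) :=
          (hs w).continuous.comp (continuous_const.prodMk continuous_id)
        have c2 : Continuous (fun ψ : Fin d → ℝ => Γ' 0 ψ w) :=
          (hs' w).continuous.comp (continuous_const.prodMk continuous_id)
        exact c1.sub c2
      have hFper : ∀ (ψ : Fin d → ℝ) (j : Fin d),
          F (ψ + (2 * π) • (Pi.single j 1 : Fin d → ℝ)) = F ψ := by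
        intro ψ j
        show Γ 0 _ w - Γ' 0 _ w = Γ 0 ψ w - Γ' 0 ψ w
        rw [hp w 0 ψ j, hp' w 0 ψ j]
      have hbound : ∃ C : ℝ, ∀ (σ : ℝ) (ψ : Fin d → ℝ), ‖u σ ψ‖ ≤ C := by
        obtain ⟨C, hC⟩ := periodic_bounded F hFcont hFper
        exact ⟨C, fun σ ψ => by rw [hrep]; exact hC _⟩
      have hindep : ∀ (σ : ℝ) (ψ : Fin d → ℝ), u σ ψ = F ψ := by
        intro σ ψ
        obtain ⟨N, c, hcN⟩ := hpol w
        obtain ⟨N', c', hcN'⟩ := hpol' w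
        obtain ⟨C, hC⟩ := hbound
        set p : Polynomial ℂ :=
          (∑ i : Fin (N + 1), Polynomial.C (c i ψ) * Polynomial.X ^ (i : ℕ))
            - (∑ i : Fin (N' + 1), Polynomial.C (c' i ψ) * Polynomial.X ^ (i : ℕ)) with hpdef
        have hev : ∀ x : ℝ, p.eval ((x : ℝ) : ℂ) = u x ψ := by
          intro x
          rw [hpdef]
          simp only [Polynomial.eval_sub, Polynomial.eval_finset_sum, Polynomial.eval_mul,
            Polynomial.eval_C, Polynomial.eval_pow, Polynomial.eval_X]
          rw [hu]
          simp only [hcN x ψ, hcN' x ψ]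
        calc u σ ψ = p.eval ((σ : ℝ) : ℂ) := (hev σ).symm
          _ = p.eval 0 := poly_bounded_eval p C (fun x => by rw [hev]; exact hC x ψ) σ
          _ = u 0 ψ := by rw [← Complex.ofReal_zero, hev]
          _ = F ψ := rfl
      have hinvF : ∀ (ψ : Fin d → ℝ) (s : ℝ), F (ψ + s • ω) = F ψ := by
        intro ψ s
        calc F (ψ + s • ω) = u s (ψ + s • ω) := (hindep s _).symm
          _ = u (0 + s) (ψ + s • ω) := by rw [zero_add]
          _ = u 0 ψ := hconst 0 ψ s
          _ = F ψ := rfl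
      have hF0 : F θ₀ = 0 := by
        show Γ 0 θ₀ w - Γ' 0 θ₀ w = 0
        rw [hi, hi', sub_self]
      have hzero : u τ θ = 0 := by
        rw [hrep]
        rw [invariant_const ω hω F hFcont hFper hinvF (θ - τ • ω) θ₀, hF0]
      have := sub_eq_zero.mp hzero
      exact this
  funext τ θ w
  exact main w.length w rfl τ θ
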